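/- For any Q ∈ P_K(O(d)) and any X ∈ ℝ^{nd×Kd}: a matrix W ∈ F minimizes ‖W − X‖_F over F if and only if W·Q minimizes ‖W' − X·Q‖_F over W' ∈ F. In particular, Π_F(X·Q) = Π_F(X)·Q as sets of minimizers. -/

import Mathlib

open Matrix BigOperators Finset

/-- Frobenius norm of a real matrix. -/
noncomputable def frobNorm {a b : Type*} [Fintype a] [Fintype b]
    (X : Matrix a b ℝ) : ℝ :=
  Real.sqrt (∑ i, ∑ j, X i j ^ 2)

/-- `Q` belongs to the real orthogonal group `O(d)`. -/
def IsOrthoMat {d : ℕ} (Q : Matrix (Fin d) (Fin d) ℝ) : Prop :=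
  Q * Qᵀ = 1 ∧ Qᵀ * Q = 1

/-- `Q` belongs to the special orthogonal group `SO(d)`. -/
def IsSpecOrthoMat {d : ℕ} (Q : Matrix (Fin d) (Fin d) ℝ) : Prop :=
  IsOrthoMat Q ∧ Q.det = 1

/-- The `(i,j)`-th `d × d` block of a block matrix. -/
def blockOf {n K d : ℕ} (X : Matrix (Fin n × Fin d) (Fin K × Fin d) ℝ)
    (i : Fin n) (j : Fin K) : Matrix (Fin d) (Fin d) ℝ :=
  fun a b => X (i, a) (j, b)

/-- The singular values of a real `d × d` matrix: square roots of the
eigenvalues of the Gram matrix `Xᴴ X`. -/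
noncomputable def singVals {d : ℕ} (X : Matrix (Fin d) (Fin d) ℝ) : Fin d → ℝ :=
  fun k => Real.sqrt ((show (Xᵀ * X).IsHermitian by
    simpa [Matrix.conjTranspose_eq_transpose_of_trivial] using
      Matrix.isHermitian_conjTranspose_mul_self X).eigenvalues k)

/-- Nuclear norm: the sum of the singular values. -/
noncomputable def nuclearNorm {d : ℕ} (X : Matrix (Fin d) (Fin d) ℝ) : ℝ :=
  ∑ k, singVals X k

/-- The map `μ` sending `X` to its `n × K` matrix of blockwise nuclear norms. -/
noncomputable def muMap {n K d : ℕ} (X : Matrix (Fin n × Fin d) (Fin K × Fin d) ℝ) :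
    Matrix (Fin n) (Fin K) ℝ :=
  fun i j => nuclearNorm (blockOf X i j)

/-- `H` is a clustering matrix: 0/1 entries, each row sums to 1, each column sums to `m`. -/
def IsClusteringMatrix {n K : ℕ} (m : ℕ) (H : Matrix (Fin n) (Fin K) ℝ) : Prop :=
  (∀ i j, H i j = 0 ∨ H i j = 1) ∧ (∀ i, ∑ j, H i j = 1) ∧ (∀ j, ∑ i, H i j = (m : ℝ))

/-- `V = (1_{1×K} ⊗ R) ⊙ (H ⊗ 1_{d×d})`: the `(i,j)`-th `d × d` block is `H i j • R i`. -/
def buildV {n K d : ℕ} (R : Fin n → Matrix (Fin d) (Fin d) ℝ)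
    (H : Matrix (Fin n) (Fin K) ℝ) : Matrix (Fin n × Fin d) (Fin K × Fin d) ℝ :=
  fun p q => H p.1 q.1 * R p.1 p.2 q.2

/-- Membership in the set `F` (resp. `E` if `G = SO(d)`): `V` is built from
blocks `R i ∈ G` and a clustering matrix `H`. -/
def InFeas {n K d : ℕ} (m : ℕ) (G : Matrix (Fin d) (Fin d) ℝ → Prop)
    (V : Matrix (Fin n × Fin d) (Fin K × Fin d) ℝ) : Prop :=
  ∃ (R : Fin n → Matrix (Fin d) (Fin d) ℝ) (H : Matrix (Fin n) (Fin K) ℝ),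
    (∀ i, G (R i)) ∧ IsClusteringMatrix m H ∧ V = buildV R H

/-- Membership in `F`: blocks in `O(d)`. -/
def InF {n K d : ℕ} (m : ℕ) (V : Matrix (Fin n × Fin d) (Fin K × Fin d) ℝ) : Prop :=
  InFeas m IsOrthoMat V

/-- Membership in `P_K(G)`: `M = bdiag(U₁,…,U_K) (P ⊗ I_d)` with `U_k ∈ G`
and `P` a permutation matrix, i.e. the `(a,b)` block of `M` is `U a` if `a = π b`, else `0`. -/
def InPK {K d : ℕ} (G : Matrix (Fin d) (Fin d) ℝ → Prop)
    (M : Matrix (Fin K × Fin d) (Fin K × Fin d) ℝ) : Prop :=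
  ∃ (U : Fin K → Matrix (Fin d) (Fin d) ℝ) (π : Equiv.Perm (Fin K)),
    (∀ k, G (U k)) ∧ ∀ p q, M p q = if p.1 = π q.1 then U p.1 p.2 q.2 else 0

/-- `dist_G(V₁,V₂) = min_{Q ∈ P_K(G)} ‖V₁ - V₂ Q‖_F` (the minimum is attained
since `P_K(G)` is compact; we express it as an infimum). -/
noncomputable def distG {n K d : ℕ} (G : Matrix (Fin d) (Fin d) ℝ → Prop)
    (V₁ V₂ : Matrix (Fin n × Fin d) (Fin K × Fin d) ℝ) : ℝ :=
  sInf {r | ∃ Q, InPK G Q ∧ r = frobNorm (V₁ - V₂ * Q)}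

/-- Estimation error `ε_G(V)` with respect to a ground truth `Vstar`. -/
noncomputable def epsG {n K d : ℕ} (G : Matrix (Fin d) (Fin d) ℝ → Prop)
    (Vstar V : Matrix (Fin n × Fin d) (Fin K × Fin d) ℝ) : ℝ :=
  distG G V Vstar

/-
Right multiplication by `Q ∈ P_K(O(d))` is a bijection of matrices which preserves `F` (it relabels
the clusters by the permutation and rotates each row block by an orthogonal matrix) and is an
isometry for the Frobenius norm (`Q Qᵀ = 1`). A bijection of this kind carries the minimizers of
`‖· - X‖_F` over `F` exactly onto the minimizers of `‖· - X Q‖_F` over `F`.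
-/

section Minimizers

variable {α β γ : Type*} [Preorder γ] {f : α → γ} {g : β → γ} {s : Set α} {t : Set β}

theorem isMinOn_iff_of_equiv (e : α ≃ β) (hst : ∀ x, e x ∈ t ↔ x ∈ s) (hfg : ∀ x, g (e x) = f x)
    (a : α) : IsMinOn f s a ↔ IsMinOn g t (e a) := by
  simp only [isMinOn_iff]
  exact e.forall_congr fun x => by rw [hst, hfg, hfg]

theorem setOf_isMinOn_eq_image_of_equiv (e : α ≃ β) (hst : ∀ x, e x ∈ t ↔ x ∈ s)
    (hfg : ∀ x, g (e x) = f x) :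
    {b | b ∈ t ∧ IsMinOn g t b} = e '' {a | a ∈ s ∧ IsMinOn f s a} := by
  ext b
  rw [e.image_eq_preimage_symm, Set.mem_preimage, Set.mem_ofPred_eq, Set.mem_ofPred_eq,
    isMinOn_iff_of_equiv e hst hfg, ← hst, e.apply_symm_apply]

end Minimizers

theorem frobNorm_eq_sqrt_trace {a b : Type*} [Fintype a] [Fintype b] (A : Matrix a b ℝ) :
    frobNorm A = √(A * Aᵀ).trace := by
  simp [frobNorm, trace, mul_apply, sq]

theorem frobNorm_mul_of_mul_transpose_eq_one {a b : Type*} [Fintype a] [Fintype b]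
    [DecidableEq b] (A : Matrix a b ℝ) {Q : Matrix b b ℝ} (hQ : Q * Qᵀ = 1) :
    frobNorm (A * Q) = frobNorm A := by
  rw [frobNorm_eq_sqrt_trace, frobNorm_eq_sqrt_trace, transpose_mul, Matrix.mul_assoc,
    ← Matrix.mul_assoc Q, hQ, Matrix.one_mul]

theorem IsOrthoMat.mul {d : ℕ} {A B : Matrix (Fin d) (Fin d) ℝ} (hA : IsOrthoMat A)
    (hB : IsOrthoMat B) : IsOrthoMat (A * B) := by
  constructor
  · rw [transpose_mul, Matrix.mul_assoc, ← Matrix.mul_assoc B, hB.1, Matrix.one_mul, hA.1]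
  · rw [transpose_mul, Matrix.mul_assoc, ← Matrix.mul_assoc Aᵀ, hA.2, Matrix.one_mul, hB.2]

theorem IsOrthoMat.transpose {d : ℕ} {A : Matrix (Fin d) (Fin d) ℝ} (hA : IsOrthoMat A) :
    IsOrthoMat Aᵀ := by
  simpa [IsOrthoMat, and_comm] using hA

section PK

variable {K d : ℕ} {Q : Matrix (Fin K × Fin d) (Fin K × Fin d) ℝ}

theorem InPK.transpose (hQ : InPK IsOrthoMat Q) : InPK IsOrthoMat Qᵀ := by
  obtain ⟨U, π, hU, hQ⟩ := hQ
  refine ⟨fun a => (U (π a))ᵀ, π.symm, fun a => (hU (π a)).transpose, fun p q => ?_⟩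
  rw [transpose_apply, hQ]
  by_cases h : q.1 = π p.1
  · simp [h]
  · simp [h, Equiv.eq_symm_apply, Ne.symm h]

theorem InPK.transpose_mul_self (hQ : InPK IsOrthoMat Q) : Qᵀ * Q = 1 := by
  obtain ⟨U, π, hU, hQ⟩ := hQ
  ext ⟨b, e⟩ ⟨b', e'⟩
  have hcols : ∀ k, ∑ c, U k c e * U k c e' = if e = e' then 1 else 0 := fun k => by
    simpa [mul_apply, one_apply] using congrFun (congrFun (hU k).2 e) e'
  simp only [mul_apply, transpose_apply, Fintype.sum_prod_type, hQ, ite_mul, zero_mul, mul_ite,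
    mul_zero, Finset.sum_ite_irrel, Finset.sum_const_zero, Finset.sum_ite_eq', Finset.mem_univ,
    if_true, hcols, one_apply, Prod.mk.injEq, EmbeddingLike.apply_eq_iff_eq, ite_and,
    eq_comm (a := b')]

theorem InPK.mul_transpose_self (hQ : InPK IsOrthoMat Q) : Q * Qᵀ = 1 := by
  simpa using hQ.transpose.transpose_mul_self

end PK

namespace IsClusteringMatrix

variable {n K m : ℕ} {H : Matrix (Fin n) (Fin K) ℝ}

theorem existsUnique_eq_one (hH : IsClusteringMatrix m H) (i : Fin n) : ∃! j, H i j = 1 := by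
  obtain ⟨h01, hrow, -⟩ := hH
  have hcard : ((#{j | H i j = 1} : ℕ) : ℝ) = 1 :=
    (Finset.natCast_card_filter _ _).trans <| (Finset.sum_congr rfl fun j _ => by
      rcases h01 i j with h | h <;> simp [h]).trans (hrow i)
  simpa only [Finset.mem_filter, Finset.mem_univ, true_and] using
    Finset.card_eq_one_iff_existsUnique.1 (Nat.cast_eq_one.1 hcard)

theorem submatrix_perm (hH : IsClusteringMatrix m H) (π : Equiv.Perm (Fin K)) :
    IsClusteringMatrix m (H.submatrix id π) :=
  ⟨fun i j => hH.1 i (π j), fun i => (Equiv.sum_comp π (H i)).trans (hH.2.1 i),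
    fun j => hH.2.2 (π j)⟩

end IsClusteringMatrix

theorem InF.mul_of_inPK {n K d m : ℕ} {W : Matrix (Fin n × Fin d) (Fin K × Fin d) ℝ}
    {Q : Matrix (Fin K × Fin d) (Fin K × Fin d) ℝ} (hW : InF m W) (hQ : InPK IsOrthoMat Q) :
    InF m (W * Q) := by
  obtain ⟨R, H, hR, hH, rfl⟩ := hW
  obtain ⟨U, π, hU, hQ⟩ := hQ
  choose j hj using hH.existsUnique_eq_one
  refine ⟨fun i => R i * U (j i), H.submatrix id π, fun i => (hR i).mul (hU (j i)),
    hH.submatrix_perm π, ?_⟩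
  ext ⟨i, c⟩ ⟨b, e⟩
  have hcluster : H i (π b) * (R i * U (π b)) c e = H i (π b) * (R i * U (j i)) c e := by
    rcases hH.1 i (π b) with h | h
    · simp [h]
    · rw [(hj i).2 _ h]
  refine Eq.trans ?_ hcluster
  simp only [buildV, mul_apply, Fintype.sum_prod_type, hQ, mul_ite, mul_zero, Finset.sum_ite_irrel,
    Finset.sum_const_zero, Finset.sum_ite_eq', Finset.mem_univ, if_true, Finset.mul_sum, mul_assoc]

theorem inF_mul_iff_of_inPK {n K d m : ℕ} {W : Matrix (Fin n × Fin d) (Fin K × Fin d) ℝ}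
    {Q : Matrix (Fin K × Fin d) (Fin K × Fin d) ℝ} (hQ : InPK IsOrthoMat Q) :
    InF m (W * Q) ↔ InF m W := by
  refine ⟨fun h => ?_, fun h => h.mul_of_inPK hQ⟩
  simpa [Matrix.mul_assoc, hQ.mul_transpose_self] using h.mul_of_inPK hQ.transpose

/-- for `Q ∈ P_K(O(d))` and `X ∈ ℝ^{nd×Kd}`, `W ∈ F` minimizes
`‖· - X‖_F` over `F` iff `W Q` minimizes `‖· - X Q‖_F` over `F`; in particular
`Π_F(X Q) = Π_F(X) Q` as sets of minimizers. -/
theorem stmt6 {n K d m : ℕ}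
    (Q : Matrix (Fin K × Fin d) (Fin K × Fin d) ℝ) (hQ : InPK IsOrthoMat Q)
    (X : Matrix (Fin n × Fin d) (Fin K × Fin d) ℝ) :
    (∀ W, InF m W →
      ((∀ W', InF m W' → frobNorm (W - X) ≤ frobNorm (W' - X)) ↔
        (∀ W', InF m W' → frobNorm (W * Q - X * Q) ≤ frobNorm (W' - X * Q)))) ∧
    {W' | InF m W' ∧ ∀ W'', InF m W'' → frobNorm (W' - X * Q) ≤ frobNorm (W'' - X * Q)}
      = (fun W => W * Q) ''
        {W | InF m W ∧ ∀ W'', InF m W'' → frobNorm (W - X) ≤ frobNorm (W'' - X)} := by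
  let e : Matrix (Fin n × Fin d) (Fin K × Fin d) ℝ ≃ Matrix (Fin n × Fin d) (Fin K × Fin d) ℝ
    := ⟨(· * Q), (· * Qᵀ), fun W => by simp [Matrix.mul_assoc, hQ.mul_transpose_self],
      fun W => by simp [Matrix.mul_assoc, hQ.transpose_mul_self]⟩
  have hF (W) : e W ∈ {V | InF m V} ↔ W ∈ {V | InF m V} := inF_mul_iff_of_inPK hQ
  have hdist (W) : frobNorm (e W - X * Q) = frobNorm (W - X) := by
    rw [← frobNorm_mul_of_mul_transpose_eq_one (W - X) hQ.mul_transpose_self, Matrix.sub_mul]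
    rfl
  exact ⟨fun W _ => isMinOn_iff_of_equiv (f := (frobNorm <| · - X))
      (g := (frobNorm <| · - X * Q)) e hF hdist W,
    setOf_isMinOn_eq_image_of_equiv (f := (frobNorm <| · - X)) (g := (frobNorm <| · - X * Q))
      e hF hdist⟩
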